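/- Let n ≥ 1 be an integer and c ∈ Ω'_n a valid configuration. Suppose p ∈ ℤ^2 and d ≥ 1 are such that c(p) and c(p+(d,0)) are junction tiles (elements of J'_n) and c(p+(e,0)) is not a junction tile for every 0 < e < d. Then d ∈ {n, n+1, n+2}, and the word of bottom labels (bottom label of c(p+(e,0)))_{e=0,…,d−1} belongs to {00n, 01n, 01n̄} · {11n, 11n̄}^{d−1}. -/

import Mathlib

structure WangTile (C : Type*) where
  right : C
  top : C
  left : C
  bottom : C
deriving DecidableEq

abbrev Lbl : Type := ℤ × ℤ × ℤ

def Vn (n : ℤ) : Set Lbl :=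
  {v | 0 ≤ v.1 ∧ v.1 ≤ v.2.1 ∧ v.2.1 ≤ 1 ∧ v.2.1 ≤ v.2.2 ∧ v.2.2 ≤ n + 1}

def hatT {C : Type*} (t : WangTile C) : WangTile C :=
  ⟨t.top, t.right, t.bottom, t.left⟩

def whiteTiles (n : ℤ) : Set (WangTile Lbl) :=
  {t | ∃ i j : ℤ, 1 ≤ i ∧ i ≤ n ∧ 1 ≤ j ∧ j ≤ n ∧
    t = ⟨(1, 1, i + 1), (1, 1, j + 1), (1, 1, i), (1, 1, j)⟩}

def blueH (n : ℤ) : Set (WangTile Lbl) :=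
  {t | ∃ i : ℤ, 0 ≤ i ∧ i ≤ n ∧ t = ⟨(0, 0, i + 1), (1, 1, 1), (0, 0, i), (1, 1, n)⟩}

def greenH (n : ℤ) : Set (WangTile Lbl) :=
  {t | ∃ i : ℤ, 0 ≤ i ∧ i ≤ n ∧ t = ⟨(0, 1, i + 1), (1, 1, 1), (0, 0, i), (1, 1, n + 1)⟩}

def yellowH (n : ℤ) : Set (WangTile Lbl) :=
  {t | ∃ i : ℤ, 1 ≤ i ∧ i ≤ n ∧ t = ⟨(0, 1, i + 1), (1, 1, 2), (0, 1, i), (1, 1, n + 1)⟩}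

def antiH (n : ℤ) : Set (WangTile Lbl) :=
  {t | ∃ i : ℤ, 1 ≤ i ∧ i ≤ n ∧ t = ⟨(0, 0, i + 1), (1, 1, 2), (0, 1, i), (1, 1, n)⟩}

def junctionTile (n k l r s : ℤ) : WangTile Lbl :=
  ⟨(0, k, l), (0, r, s), (0, s, r + n), (0, l, k + n)⟩

def jPairs : Set (ℤ × ℤ) := {(0, 0), (0, 1), (1, 1)}

def junctions (n : ℤ) : Set (WangTile Lbl) :=
  {t | ∃ k l r s : ℤ, (k, l) ∈ jPairs ∧ (r, s) ∈ jPairs ∧ t = junctionTile n k l r s}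

def Text (n : ℤ) : Set (WangTile Lbl) :=
  whiteTiles n ∪ blueH n ∪ greenH n ∪ yellowH n ∪ antiH n ∪
    hatT '' blueH n ∪ hatT '' greenH n ∪ hatT '' yellowH n ∪ hatT '' antiH n ∪ junctions n

def Dset (n : ℤ) : Set (WangTile Lbl) :=
  {(⟨(0, 0, n + 1), (1, 1, 1), (0, 0, n), (1, 1, n)⟩ : WangTile Lbl),
    hatT (⟨(0, 0, n + 1), (1, 1, 1), (0, 0, n), (1, 1, n)⟩ : WangTile Lbl),
    junctionTile n 0 0 1 1, junctionTile n 1 1 0 0}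

def Tmet (n : ℤ) : Set (WangTile Lbl) :=
  Text n \ (antiH n ∪ hatT '' antiH n ∪ Dset n)

def ValidConfig {C : Type*} (T : Set (WangTile C)) (x : ℤ × ℤ → WangTile C) : Prop :=
  (∀ m, x m ∈ T) ∧
    (∀ m : ℤ × ℤ, (x m).right = (x (m.1 + 1, m.2)).left) ∧
    (∀ m : ℤ × ℤ, (x m).top = (x (m.1, m.2 + 1)).bottom)

def ValidPattern {C : Type*} (T : Set (WangTile C)) (w h : ℕ) (p : ℕ → ℕ → WangTile C) : Prop :=
  (∀ i j, i < w → j < h → p i j ∈ T) ∧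
    (∀ i j, i + 1 < w → j < h → (p i j).right = (p (i + 1) j).left) ∧
    (∀ i j, i < w → j + 1 < h → (p i j).top = (p i (j + 1)).bottom)

def bottomWord {C : Type*} (w : ℕ) (p : ℕ → ℕ → WangTile C) : List C :=
  (List.range w).map fun i => (p i 0).bottom

def topWord {C : Type*} (w h : ℕ) (p : ℕ → ℕ → WangTile C) : List C :=
  (List.range w).map fun i => (p i (h - 1)).top

def leftWord {C : Type*} (h : ℕ) (p : ℕ → ℕ → WangTile C) : List C :=
  (List.range h).map fun j => (p 0 j).left

def rightWord {C : Type*} (w h : ℕ) (p : ℕ → ℕ → WangTile C) : List C :=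
  (List.range h).map fun j => (p (w - 1) j).right

def tau (n : ℤ) (v : Lbl) : List Lbl :=
  if v.1 = v.2.2 then
    (0, v.1 - v.2.1 + 1, n + 1) :: List.replicate (n - v.2.2).toNat (1, 1, n + 1)
  else
    (0, v.1 - v.2.1 + 1, n) ::
      (List.replicate (v.2.2 - v.1 - 1).toNat (1, 1, n) ++
        List.replicate (n + 1 - v.2.2).toNat (1, 1, n + 1))

/-! Leaving a junction tile `junctionTile n k l r s` to the right, the horizontal tiles carry a
counter in the third coordinate of their side labels that starts at `l` and increases by one per
tile; the next junction `junctionTile n k' l' r' s'` reads it as `r' + n`. Hence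
`d = n + 1 + r' - l` with `l, r' ∈ {0, 1}`, and the bottom labels are those of horizontal tiles. -/

variable {n : ℤ} {t : WangTile Lbl}

theorem ValidConfig.left_eq_right {C : Type*} {T : Set (WangTile C)} {x : ℤ × ℤ → WangTile C}
    (hx : ValidConfig T x) (p : ℤ × ℤ) (e : ℤ) :
    (x (p.1 + (e + 1), p.2)).left = (x (p.1 + e, p.2)).right := by
  rw [← add_assoc]
  exact (hx.2.1 (p.1 + e, p.2)).symm

/-- The non-junction tiles whose left label starts with `0` are exactly the horizontal ones
(blue, green, yellow, antigreen). -/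
theorem right_and_bottom_of_left_fst_eq_zero (ht : t ∈ Text n) (hj : t ∉ junctions n)
    (hl : t.left.1 = 0) :
    t.right.1 = 0 ∧ t.right.2.2 = t.left.2.2 + 1 ∧
      t.bottom ∈ ({(1, 1, n), (1, 1, n + 1)} : Set Lbl) := by
  rcases ht with ((((((((hw | hb) | hg) | hy) | ha) | hhb) | hhg) | hhy) | hha) | hjn
  · obtain ⟨i, j, -, -, -, -, rfl⟩ := hw; simp at hl
  · obtain ⟨i, -, -, rfl⟩ := hb; simp
  · obtain ⟨i, -, -, rfl⟩ := hg; simp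
  · obtain ⟨i, -, -, rfl⟩ := hy; simp
  · obtain ⟨i, -, -, rfl⟩ := ha; simp
  · obtain ⟨-, ⟨i, -, -, rfl⟩, rfl⟩ := hhb; simp [hatT] at hl
  · obtain ⟨-, ⟨i, -, -, rfl⟩, rfl⟩ := hhg; simp [hatT] at hl
  · obtain ⟨-, ⟨i, -, -, rfl⟩, rfl⟩ := hhy; simp [hatT] at hl
  · obtain ⟨-, ⟨i, -, -, rfl⟩, rfl⟩ := hha; simp [hatT] at hl
  · exact absurd hjn hj

theorem right_label_along_row {c : ℤ × ℤ → WangTile Lbl} (hc : ValidConfig (Text n) c)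
    {p : ℤ × ℤ} (hp : (c p).right.1 = 0) {d : ℤ}
    (hrow : ∀ e : ℤ, 0 < e → e < d → c (p.1 + e, p.2) ∉ junctions n) :
    ∀ e : ℤ, 0 ≤ e → e < d →
      (c (p.1 + e, p.2)).right.1 = 0 ∧ (c (p.1 + e, p.2)).right.2.2 = (c p).right.2.2 + e := by
  intro e he
  induction e, he using Int.leInduction with
  | base => exact fun _ => by simpa using hp
  | succ e he ih =>
    intro hed
    obtain ⟨ih1, ih2⟩ := ih (by omega)
    have hleft := hc.left_eq_right p e
    obtain ⟨h1, h2, -⟩ := right_and_bottom_of_left_fst_eq_zero (hc.1 _)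
      (hrow (e + 1) (by omega) hed) (by rw [hleft, ih1])
    exact ⟨h1, by rw [h2, hleft, ih2]; ring⟩

theorem stmt8_general (n : ℤ) (c : ℤ × ℤ → WangTile Lbl)
    (hc : ValidConfig (Text n) c) (p : ℤ × ℤ) (d : ℤ) (hd : 1 ≤ d)
    (h0 : c p ∈ junctions n) (h1 : c (p.1 + d, p.2) ∈ junctions n)
    (h2 : ∀ e : ℤ, 0 < e → e < d → c (p.1 + e, p.2) ∉ junctions n) :
    (d = n ∨ d = n + 1 ∨ d = n + 2) ∧
    (c p).bottom ∈ ({(0, 0, n), (0, 1, n), (0, 1, n + 1)} : Set Lbl) ∧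
    (∀ e : ℤ, 1 ≤ e → e < d →
      (c (p.1 + e, p.2)).bottom ∈ ({(1, 1, n), (1, 1, n + 1)} : Set Lbl)) := by
  obtain ⟨k, l, r, s, hkl, -, hcp⟩ := h0
  obtain ⟨k', l', r', s', -, hrs', hcd⟩ := h1
  simp only [jPairs, Set.mem_insert_iff, Set.mem_singleton_iff, Prod.mk.injEq] at hkl hrs'
  have hrow := right_label_along_row hc (by simp [hcp, junctionTile]) h2
  have hmeet : l + (d - 1) = r' + n := by
    have hleft := hc.left_eq_right p (d - 1)
    rw [sub_add_cancel, hcd] at hleft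
    have := (hrow (d - 1) (by omega) (by omega)).2
    rw [← hleft, hcp] at this
    simpa [junctionTile] using this.symm
  refine ⟨by omega, ?_, fun e he1 he2 => ?_⟩
  · rcases hkl with ⟨rfl, rfl⟩ | ⟨rfl, rfl⟩ | ⟨rfl, rfl⟩ <;> simp [hcp, junctionTile, add_comm]
  · have hleft := hc.left_eq_right p (e - 1)
    rw [sub_add_cancel] at hleft
    exact (right_and_bottom_of_left_fst_eq_zero (hc.1 _) (h2 e (by omega) he2)
      (by rw [hleft, (hrow (e - 1) (by omega) (by omega)).1])).2.2

/-- distance between consecutive junction tiles in a row of a configuration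
of `Ω'_n`, and the structure of the word of bottom labels between them. -/
theorem stmt8 (n : ℤ) (hn : 1 ≤ n) (c : ℤ × ℤ → WangTile Lbl)
    (hc : ValidConfig (Text n) c) (p : ℤ × ℤ) (d : ℤ) (hd : 1 ≤ d)
    (h0 : c p ∈ junctions n) (h1 : c (p.1 + d, p.2) ∈ junctions n)
    (h2 : ∀ e : ℤ, 0 < e → e < d → c (p.1 + e, p.2) ∉ junctions n) :
    (d = n ∨ d = n + 1 ∨ d = n + 2) ∧
    (c p).bottom ∈ ({(0, 0, n), (0, 1, n), (0, 1, n + 1)} : Set Lbl) ∧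
    (∀ e : ℤ, 1 ≤ e → e < d →
      (c (p.1 + e, p.2)).bottom ∈ ({(1, 1, n), (1, 1, n + 1)} : Set Lbl)) :=
  stmt8_general n c hc p d hd h0 h1 h2
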